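/- Let G₁ be a connected graph with odd cycles, exponent γ₁, and diameter d₁ ≥ 1, and let G₂ be a connected graph with diameter d₂ ≥ 1. Then the diameter of G₁ ⊗ G₂ is at most max{γ₁ + 1, d₂}; moreover, if G₂ is bipartite, then the diameter of G₁ ⊗ G₂ equals max{γ₁ + 1, d₂}. -/
import Mathlib


/-- Existence of a walk of length `k` from `x` to `y` in the graph with adjacency
relation `adj` (loops allowed, no parallel edges). -/
def GWalk {V : Type*} (adj : V → V → Prop) : ℕ → V → V → Prop
  | 0, x, y => x = y
  | k + 1, x, y => ∃ z, adj x z ∧ GWalk adj k z y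

/-- Distance: the length of a shortest walk (= shortest path) from `x` to `y`. -/
noncomputable def GDist {V : Type*} (adj : V → V → Prop) (x y : V) : ℕ :=
  sInf {k | GWalk adj k x y}

/-- The graph is connected: any two vertices are joined by some walk. -/
def GConnected {V : Type*} (adj : V → V → Prop) : Prop :=
  ∀ x y, ∃ k, GWalk adj k x y

/-- The graph contains a closed walk of odd length (an "odd cycle"). -/
def HasOddClosedWalk {V : Type*} (adj : V → V → Prop) : Prop :=
  ∃ (x : V) (k : ℕ), Odd k ∧ GWalk adj k x x

/-- The graph is primitive: some `γ` works as an exponent. -/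
def GPrimitive {V : Type*} (adj : V → V → Prop) : Prop :=
  ∃ γ : ℕ, ∀ x y : V, ∀ k ≥ γ, GWalk adj k x y

/-- Adjacency of the Kronecker (tensor) product. -/
def KronAdj {V₁ V₂ : Type*} (adj₁ : V₁ → V₁ → Prop) (adj₂ : V₂ → V₂ → Prop) :
    V₁ × V₂ → V₁ × V₂ → Prop :=
  fun a b => adj₁ a.1 b.1 ∧ adj₂ a.2 b.2

section aux
variable {V : Type*} {adj : V → V → Prop}

lemma gwalk_append {k l : ℕ} {x y z : V} (h1 : GWalk adj k x y) (h2 : GWalk adj l y z) :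
    GWalk adj (k + l) x z := by
  induction k generalizing x with
  | zero => rw [show x = y from h1]; simpa using h2
  | succ n ih =>
    obtain ⟨w, hw, hwalk⟩ := h1
    exact Nat.succ_add n l ▸ ⟨w, hw, ih hwalk⟩

lemma gwalk_rev (hs : Symmetric adj) {k : ℕ} {x y : V} (h : GWalk adj k x y) :
    GWalk adj k y x := by
  induction k generalizing x with
  | zero => exact (show x = y from h).symm
  | succ n ih =>
    obtain ⟨w, hw, hwalk⟩ := h
    exact gwalk_append (ih hwalk) ⟨x, hs hw, rfl⟩

lemma gwalk_head {k : ℕ} {x y : V} (hk : 1 ≤ k) (h : GWalk adj k x y) : ∃ z, adj x z := by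
  cases k with
  | zero => omega
  | succ n => obtain ⟨z, hz, _⟩ := h; exact ⟨z, hz⟩

lemma gwalk_pad (hs : Symmetric adj) {k : ℕ} {x y : V} (hn : ∃ w, adj x w)
    (h : GWalk adj k x y) : GWalk adj (k + 2) x y := by
  obtain ⟨w, hw⟩ := hn
  have h2 : GWalk adj 2 x x := ⟨w, hw, x, hs hw, rfl⟩
  simpa [Nat.add_comm] using gwalk_append h2 h

lemma gwalk_pad_iter (hs : Symmetric adj) {k : ℕ} {x y : V} (hn : ∃ w, adj x w)
    (h : GWalk adj k x y) : ∀ t, GWalk adj (k + 2 * t) x y := by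
  intro t
  induction t with
  | zero => simpa using h
  | succ n ih =>
    have := gwalk_pad hs hn ih
    have e : k + 2 * n + 2 = k + 2 * (n + 1) := by ring
    exact e ▸ this

lemma bipartite_parity (hs : Symmetric adj) (hb : ¬ HasOddClosedWalk adj)
    {k l : ℕ} {x y : V} (h1 : GWalk adj k x y) (h2 : GWalk adj l x y) : k % 2 = l % 2 := by
  by_contra hne
  have hcl : GWalk adj (k + l) x x := gwalk_append h1 (gwalk_rev hs h2)
  exact hb ⟨x, k + l, Nat.odd_iff.mpr (by omega), hcl⟩

end aux

lemma kron_walk_iff {V₁ V₂ : Type*} {adj₁ : V₁ → V₁ → Prop} {adj₂ : V₂ → V₂ → Prop}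
    {k : ℕ} {p q : V₁ × V₂} :
    GWalk (KronAdj adj₁ adj₂) k p q ↔ GWalk adj₁ k p.1 q.1 ∧ GWalk adj₂ k p.2 q.2 := by
  induction k generalizing p with
  | zero =>
    constructor
    · rintro (h : p = q); exact ⟨congrArg Prod.fst h, congrArg Prod.snd h⟩
    · rintro ⟨h1, h2⟩; exact Prod.ext h1 h2
  | succ n ih =>
    constructor
    · rintro ⟨z, ⟨ha1, ha2⟩, hw⟩
      obtain ⟨hw1, hw2⟩ := ih.mp hw
      exact ⟨⟨z.1, ha1, hw1⟩, ⟨z.2, ha2, hw2⟩⟩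
    · rintro ⟨⟨z1, ha1, hw1⟩, ⟨z2, ha2, hw2⟩⟩
      exact ⟨(z1, z2), ⟨ha1, ha2⟩, ih.mpr ⟨hw1, hw2⟩⟩

theorem stmt16 {V₁ V₂ : Type*} (adj₁ : V₁ → V₁ → Prop) (adj₂ : V₂ → V₂ → Prop)
    (hsymm₁ : Symmetric adj₁) (hsymm₂ : Symmetric adj₂)
    (hc₁ : GConnected adj₁) (hc₂ : GConnected adj₂)
    (hodd₁ : HasOddClosedWalk adj₁) (γ₁ d₁ d₂ D : ℕ)
    (hγ₁ : IsLeast {m : ℕ | ∀ x y : V₁, ∀ k ≥ m, GWalk adj₁ k x y} γ₁)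
    (hd₁ : IsGreatest {m : ℕ | ∃ x y : V₁, m = GDist adj₁ x y} d₁) (h1 : 1 ≤ d₁)
    (hd₂ : IsGreatest {m : ℕ | ∃ x y : V₂, m = GDist adj₂ x y} d₂) (h2 : 1 ≤ d₂)
    (hD : IsGreatest {m : ℕ | ∃ x y : V₁ × V₂, m = GDist (KronAdj adj₁ adj₂) x y} D) :
    D ≤ max (γ₁ + 1) d₂ ∧ (¬ HasOddClosedWalk adj₂ → D = max (γ₁ + 1) d₂) := by
  obtain ⟨hγub, hγleast⟩ := hγ₁
  obtain ⟨a₁, b₁, hd₁eq⟩ := hd₁.1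
  obtain ⟨a₂, b₂, hd₂eq⟩ := hd₂.1
  -- γ₁ ≥ 1
  have hγpos : 1 ≤ γ₁ := by
    by_contra hcon
    have hγ0 : γ₁ = 0 := by omega
    have hw : GWalk adj₁ 0 a₁ b₁ := hγub a₁ b₁ 0 (by omega)
    have : GDist adj₁ a₁ b₁ = 0 :=
      Nat.le_antisymm (Nat.sInf_le hw) (Nat.zero_le _)
    omega
  -- every vertex of V₁ has a neighbor
  have hne₁ : ∀ v : V₁, ∃ w, adj₁ v w := fun v =>
    gwalk_head hγpos (hγub v v γ₁ le_rfl)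
  -- distance-realizing walk in G₂: a₂ → b₂ of length d₂
  have hset₂ : {k | GWalk adj₂ k a₂ b₂}.Nonempty := hc₂ a₂ b₂
  have hwd₂ : GWalk adj₂ d₂ a₂ b₂ := by
    have := Nat.sInf_mem hset₂
    rw [← GDist, ← hd₂eq] at this
    exact this
  -- every vertex of V₂ has a neighbor
  have hne₂ : ∀ v : V₂, ∃ w, adj₂ v w := by
    intro v
    obtain ⟨k, hk⟩ := hc₂ v a₂
    cases k with
    | zero =>
      rw [show v = a₂ from hk]
      exact gwalk_head h2 hwd₂
    | succ n => exact gwalk_head (Nat.succ_le_succ (Nat.zero_le n)) hk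
  -- key: between any two product vertices there is a walk of length ≤ max (γ₁+1) d₂
  have key : ∀ (x₁ y₁ : V₁) (x₂ y₂ : V₂), ∃ k ≤ max (γ₁ + 1) d₂,
      GWalk (KronAdj adj₁ adj₂) k (x₁, x₂) (y₁, y₂) := by
    intro x₁ y₁ x₂ y₂
    have hset : {k | GWalk adj₂ k x₂ y₂}.Nonempty := hc₂ x₂ y₂
    have hwd : GWalk adj₂ (GDist adj₂ x₂ y₂) x₂ y₂ := Nat.sInf_mem hset
    set d := GDist adj₂ x₂ y₂ with hd
    have hdle : d ≤ d₂ := hd₂.2 ⟨x₂, y₂, rfl⟩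
    by_cases hcase : γ₁ ≤ d
    · exact ⟨d, le_max_of_le_right hdle,
        kron_walk_iff.mpr ⟨hγub x₁ y₁ d hcase, hwd⟩⟩
    · set k := if γ₁ % 2 = d % 2 then γ₁ else γ₁ + 1 with hkdef
      have hk1 : γ₁ ≤ k := by unfold k; split <;> omega
      have hk2 : k ≤ γ₁ + 1 := by unfold k; split <;> omega
      have hkpar : k % 2 = d % 2 := by unfold k; split <;> omega
      have hteq : d + 2 * ((k - d) / 2) = k := by omega
      have hw2 : GWalk adj₂ k x₂ y₂ := by
        have := gwalk_pad_iter hsymm₂ (hne₂ x₂) hwd ((k - d) / 2)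
        rwa [hteq] at this
      exact ⟨k, le_max_of_le_left hk2, kron_walk_iff.mpr ⟨hγub x₁ y₁ k hk1, hw2⟩⟩
  -- Part 1: D ≤ max (γ₁+1) d₂
  have hDle : D ≤ max (γ₁ + 1) d₂ := by
    obtain ⟨p, q, hpq⟩ := hD.1
    obtain ⟨k, hk, hwalk⟩ := key p.1 q.1 p.2 q.2
    have : GDist (KronAdj adj₁ adj₂) p q ≤ k := Nat.sInf_le hwalk
    omega
  refine ⟨hDle, fun hbip => ?_⟩
  -- Part 2a: D ≥ d₂
  have hDd₂ : d₂ ≤ D := by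
    have hSne : {k | GWalk (KronAdj adj₁ adj₂) k (a₁, a₂) (a₁, b₂)}.Nonempty := by
      obtain ⟨k, _, hw⟩ := key a₁ a₁ a₂ b₂
      exact ⟨k, hw⟩
    have hmem := Nat.sInf_mem hSne
    have hlb : d₂ ≤ sInf {k | GWalk (KronAdj adj₁ adj₂) k (a₁, a₂) (a₁, b₂)} := by
      have hw2 : GWalk adj₂ (sInf {k | GWalk (KronAdj adj₁ adj₂) k (a₁, a₂) (a₁, b₂)}) a₂ b₂ :=
        (kron_walk_iff.mp hmem).2
      have : GDist adj₂ a₂ b₂ ≤ sInf {k | GWalk (KronAdj adj₁ adj₂) k (a₁, a₂) (a₁, b₂)} :=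
        Nat.sInf_le hw2
      omega
    have hub : GDist (KronAdj adj₁ adj₂) (a₁, a₂) (a₁, b₂) ≤ D :=
      hD.2 ⟨(a₁, a₂), (a₁, b₂), rfl⟩
    exact le_trans hlb hub
  -- Part 2b: D ≥ γ₁ + 1
  have hDγ : γ₁ + 1 ≤ D := by
    -- there is a pair with no walk of length γ₁ - 1
    have hnot : ¬ (∀ x y : V₁, ∀ k ≥ γ₁ - 1, GWalk adj₁ k x y) := by
      intro h
      have := hγleast h
      omega
    push_neg at hnot
    obtain ⟨x₁, y₁, k₀, hk₀ge, hk₀not⟩ := hnot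
    have hk₀eq : k₀ = γ₁ - 1 := by
      by_contra hne
      exact hk₀not (hγub x₁ y₁ k₀ (by omega))
    subst hk₀eq
    -- no walk of length k ≤ γ₁ - 1 with parity of γ₁ - 1
    have hnowalk : ∀ k, k % 2 = (γ₁ - 1) % 2 → k ≤ γ₁ - 1 → ¬ GWalk adj₁ k x₁ y₁ := by
      intro k hpar hle hw
      have hteq : k + 2 * ((γ₁ - 1 - k) / 2) = γ₁ - 1 := by omega
      have := gwalk_pad_iter hsymm₁ (hne₁ x₁) hw ((γ₁ - 1 - k) / 2)
      rw [hteq] at this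
      exact hk₀not this
    -- choose x₂, y₂ with a reference walk of parity (γ₁ - 1) % 2
    obtain ⟨w₂, hw₂⟩ := hne₂ a₂
    obtain ⟨x₂, y₂, r, hr, hrpar⟩ :
        ∃ (x₂ y₂ : V₂) (r : ℕ), GWalk adj₂ r x₂ y₂ ∧ r % 2 = (γ₁ - 1) % 2 := by
      by_cases hpar : (γ₁ - 1) % 2 = 0
      · exact ⟨a₂, a₂, 0, rfl, by omega⟩
      · exact ⟨a₂, w₂, 1, ⟨w₂, hw₂, rfl⟩, by omega⟩
    -- every product walk (x₁,x₂) → (y₁,y₂) has length ≥ γ₁ + 1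
    have hall : ∀ k, GWalk (KronAdj adj₁ adj₂) k (x₁, x₂) (y₁, y₂) → γ₁ + 1 ≤ k := by
      intro k hw
      obtain ⟨hw1, hw2⟩ := kron_walk_iff.mp hw
      have hkpar : k % 2 = (γ₁ - 1) % 2 := by
        have := bipartite_parity hsymm₂ hbip hw2 hr
        omega
      by_contra hcon
      rcases Nat.lt_or_ge k γ₁ with hlt | hge
      · exact hnowalk k hkpar (by omega) hw1
      · have : k = γ₁ := by omega
        subst this
        omega
    have hSne : {k | GWalk (KronAdj adj₁ adj₂) k (x₁, x₂) (y₁, y₂)}.Nonempty := by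
      obtain ⟨k, _, hw⟩ := key x₁ y₁ x₂ y₂
      exact ⟨k, hw⟩
    have hlb : γ₁ + 1 ≤ GDist (KronAdj adj₁ adj₂) (x₁, x₂) (y₁, y₂) :=
      hall _ (Nat.sInf_mem hSne)
    have hub : GDist (KronAdj adj₁ adj₂) (x₁, x₂) (y₁, y₂) ≤ D :=
      hD.2 ⟨(x₁, x₂), (y₁, y₂), rfl⟩
    omega
  omega
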